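/- Let t ≥ 0 and let w = (w_0, w_1, …, w_{t+1}) be a tuple of nonnegative integers satisfying w_0 + ∑_{n=1}^{t+1} 2^{n−1} w_n = 2^t − 1. With E-moves defined as adding ±1 to each of w_0,…,w_{t'} and ∓1 to w_{t'+1} (for some 0 ≤ t' ≤ t, provided all entries remain nonnegative), there is a finite sequence of E-moves transforming w into (0, 1, 1, …, 1, 0). -/

import Mathlib

open Finset

/-- An E-move on a tuple `w = (w_0, …, w_{t+1})`: choose `0 ≤ t' ≤ t` and either add `1` to each
of `w_0, …, w_{t'}` and subtract `1` from `w_{t'+1}`, or subtract `1` from each of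
`w_0, …, w_{t'}` and add `1` to `w_{t'+1}`, provided all resulting entries are nonnegative. -/
def EMove (t : ℕ) (w w' : Fin (t + 2) → ℕ) : Prop :=
  ∃ t' : ℕ, ∃ _ : t' ≤ t,
    (((∀ n : Fin (t + 2), (n : ℕ) ≤ t' → w' n = w n + 1) ∧
        w' ⟨t' + 1, by omega⟩ + 1 = w ⟨t' + 1, by omega⟩) ∨
      ((∀ n : Fin (t + 2), (n : ℕ) ≤ t' → w' n + 1 = w n) ∧
        w' ⟨t' + 1, by omega⟩ = w ⟨t' + 1, by omega⟩ + 1)) ∧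
    (∀ n : Fin (t + 2), t' + 1 < (n : ℕ) → w' n = w n)

/-!
The weighted sum `w_0 + ∑ 2^(n-1) w_n` is invariant under E-moves. Think of `w` as a heap of
coins, `w_n` of them worth `2^(n-1)` (worth `1` for `n = 0`). Exchanging a coin at position `0`
for one at position `1` is a single E-move; exchanging two coins at a position `1 ≤ j ≤ t` for one
at `j + 1` takes two (raise `w_0, …, w_{j-1}` at the expense of `w_j`, then lower `w_0, …, w_j` in
favour of `w_{j+1}`). Both exchanges decrease `w_0 + ∑ w_n`. When neither applies, `w_0 = 0` and
every `w_n ≤ 1`, and the invariant `2^t - 1` forces `w = (0, 1, …, 1, 0)` (uniqueness of binary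
expansions).
-/

open Function Relation

def weight (n : ℕ) : ℕ := if n = 0 then 1 else 2 ^ (n - 1)

def weightedSum {m : ℕ} (w : Fin m → ℕ) : ℕ := ∑ n : Fin m, weight n * w n

lemma weight_pos (n : ℕ) : 0 < weight n := by
  unfold weight; split_ifs <;> positivity

lemma weight_succ (n : ℕ) : weight (n + 1) = 2 ^ n := rfl

lemma sum_range_weight (k : ℕ) : ∑ n ∈ range (k + 1), weight n = 2 ^ k := by
  induction k with
  | zero => rfl
  | succ k ih => rw [sum_range_succ, ih, weight_succ, pow_succ, mul_two]

lemma sum_fin_ite_val_eq {m i : ℕ} (hi : i < m) (f : ℕ → ℕ) :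
    ∑ n : Fin m, (if (n : ℕ) = i then f n else 0) = f i := by
  rw [Fin.sum_univ_eq_sum_range (fun n => if n = i then f n else 0), sum_ite_eq',
    if_pos (mem_range.2 hi)]

lemma sum_fin_ite_le_weight {m k : ℕ} (hk : k < m) :
    ∑ n : Fin m, (if (n : ℕ) ≤ k then weight n else 0) = 2 ^ k := by
  rw [Fin.sum_univ_eq_sum_range (fun n => if n ≤ k then weight n else 0), ← sum_filter,
    ← sum_range_weight]
  congr 1
  ext n
  simp only [mem_filter, mem_range]
  omega

lemma sum_update_add {ι M : Type*} [Fintype ι] [DecidableEq ι] [AddCommMonoid M]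
    (f : ι → M) (i : ι) (b : M) : ∑ n, update f i b n + f i = ∑ n, f n + b := by
  rw [sum_update_of_mem (mem_univ i), sum_eq_add_sum_sdiff_singleton_of_mem (mem_univ i) f]
  abel

lemma sum_update_update_add {ι M : Type*} [Fintype ι] [DecidableEq ι] [AddCommMonoid M]
    (f : ι → M) {i j : ι} (hij : i ≠ j) (a b : M) :
    ∑ n, update (update f i a) j b n + f i + f j = ∑ n, f n + a + b := by
  have hj := sum_update_add (update f i a) j b
  rw [update_of_ne hij.symm] at hj
  rw [add_right_comm, hj, add_right_comm, sum_update_add]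

lemma weightedSum_eq_of_raise {t k : ℕ} (hk : k ≤ t) {w w' : Fin (t + 2) → ℕ}
    (hle : ∀ n : Fin (t + 2), (n : ℕ) ≤ k → w' n = w n + 1)
    (hnext : w' ⟨k + 1, by omega⟩ + 1 = w ⟨k + 1, by omega⟩)
    (hgt : ∀ n : Fin (t + 2), k + 1 < (n : ℕ) → w' n = w n) :
    weightedSum w' = weightedSum w := by
  -- `w_0, …, w_k` gain total weight `1 + 1 + 2 + ⋯ + 2 ^ (k - 1) = 2 ^ k`, which `w_{k+1}` loses.
  have pointwise : ∀ n : Fin (t + 2),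
      weight n * w' n + (if (n : ℕ) = k + 1 then weight n else 0)
        = weight n * w n + (if (n : ℕ) ≤ k then weight n else 0) := by
    intro n
    rcases lt_trichotomy (n : ℕ) (k + 1) with h | h | h
    · rw [hle n (by omega), if_neg (by omega), if_pos (by omega)]
      ring
    · rw [if_pos h, if_neg (by omega), show n = ⟨k + 1, by omega⟩ from Fin.ext h, ← hnext]
      ring
    · rw [hgt n h, if_neg (by omega), if_neg (by omega)]
  have hsum := sum_congr rfl fun n (_ : n ∈ univ) => pointwise n
  rw [sum_add_distrib, sum_add_distrib, sum_fin_ite_val_eq (by omega),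
    sum_fin_ite_le_weight (by omega), weight_succ] at hsum
  exact Nat.add_right_cancel hsum

lemma EMove.weightedSum_eq {t : ℕ} {w w' : Fin (t + 2) → ℕ} (h : EMove t w w') :
    weightedSum w' = weightedSum w := by
  obtain ⟨k, hk, ⟨hle, hnext⟩ | ⟨hle, hnext⟩, hgt⟩ := h
  · exact weightedSum_eq_of_raise hk hle hnext hgt
  · exact (weightedSum_eq_of_raise hk (fun n hn => (hle n hn).symm) hnext.symm
      fun n hn => (hgt n hn).symm).symm

lemma weightedSum_eq_of_reflTransGen {t : ℕ} {w w' : Fin (t + 2) → ℕ}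
    (h : ReflTransGen (EMove t) w w') : weightedSum w' = weightedSum w := by
  induction h with
  | refl => rfl
  | tail _ hmove ih => rw [hmove.weightedSum_eq, ih]

lemma emove_shift_zero {t : ℕ} (w : Fin (t + 2) → ℕ) (h : 0 < w 0) :
    EMove t w (update (update w 0 (w 0 - 1)) 1 (w 1 + 1)) := by
  refine ⟨0, t.zero_le, Or.inr ⟨fun n hn => ?_, ?_⟩, fun n hn => ?_⟩
  · obtain rfl : n = 0 := Fin.ext (Nat.le_zero.1 hn)
    simp only [update_apply, zero_ne_one, if_false, if_true]
    omega
  · simp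
  · have h0 : n ≠ 0 := by rintro rfl; simp at hn
    have h1 : n ≠ 1 := by rintro rfl; simp at hn
    rw [update_of_ne h1, update_of_ne h0]

lemma reflTransGen_carry {t j : ℕ} (hj : 1 ≤ j) (hjt : j ≤ t) (w : Fin (t + 2) → ℕ)
    (h : 2 ≤ w ⟨j, by omega⟩) :
    ReflTransGen (EMove t) w (update (update w ⟨j, by omega⟩ (w ⟨j, by omega⟩ - 2))
      ⟨j + 1, by omega⟩ (w ⟨j + 1, by omega⟩ + 1)) := by
  set u : Fin (t + 2) → ℕ := fun n =>
    if (n : ℕ) < j then w n + 1 else if (n : ℕ) = j then w n - 1 else w n with hu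
  have raise : EMove t w u := by
    refine ⟨j - 1, by omega, Or.inl ⟨fun n hn => ?_, ?_⟩, fun n hn => ?_⟩
    · simp [hu, show (n : ℕ) < j by omega]
    · simp only [hu, show j - 1 + 1 = j by omega, lt_self_iff_false, ↓reduceIte]
      omega
    · simp [hu, show ¬ (n : ℕ) < j by omega, show (n : ℕ) ≠ j by omega]
  have lower : EMove t u (update (update w ⟨j, by omega⟩ (w ⟨j, by omega⟩ - 2))
      ⟨j + 1, by omega⟩ (w ⟨j + 1, by omega⟩ + 1)) := by
    refine ⟨j, hjt, Or.inr ⟨fun n hn => ?_, ?_⟩, fun n hn => ?_⟩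
    · rcases Nat.lt_or_eq_of_le hn with hlt | heq
      · rw [update_of_ne (Fin.ne_of_val_ne (by simp; omega)),
          update_of_ne (Fin.ne_of_val_ne (by simp; omega))]
        simp [hu, hlt]
      · rw [show n = ⟨j, by omega⟩ from Fin.ext heq, update_of_ne (Fin.ne_of_val_ne (by simp)),
          update_self]
        simp only [hu, lt_self_iff_false, ↓reduceIte]
        omega
    · simp [hu]
    · simp only [update_apply, Fin.ext_iff, hu]
      split_ifs <;> omega
  exact .head raise (.single lower)

def emoveTarget (t : ℕ) : Fin (t + 2) → ℕ :=
  fun n => if (n : ℕ) = 0 ∨ (n : ℕ) = t + 1 then 0 else 1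

lemma weightedSum_emoveTarget (t : ℕ) : weightedSum (emoveTarget t) = 2 ^ t - 1 := by
  have pointwise : ∀ n : Fin (t + 2),
      weight n * emoveTarget t n + (if (n : ℕ) = 0 then 1 else 0)
        = if (n : ℕ) ≤ t then weight n else 0 := by
    intro n
    by_cases h0 : (n : ℕ) = 0
    · simp [emoveTarget, weight, h0]
    · have := n.isLt
      simp only [emoveTarget, h0, false_or, if_false, add_zero]
      split_ifs <;> omega
  have hsum := sum_congr rfl fun n (_ : n ∈ univ) => pointwise n
  rw [sum_add_distrib, sum_fin_ite_val_eq (f := fun _ => 1) (by omega),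
    sum_fin_ite_le_weight (by omega)] at hsum
  exact Nat.eq_sub_of_add_eq hsum

lemma last_eq_zero_of_weightedSum_lt {t : ℕ} {w : Fin (t + 2) → ℕ}
    (h : weightedSum w < 2 ^ t) : w (Fin.last _) = 0 := by
  have hle : weight (t + 1) * w (Fin.last _) ≤ weightedSum w :=
    single_le_sum (f := fun n : Fin (t + 2) => weight n * w n) (fun _ _ => Nat.zero_le _)
      (mem_univ (Fin.last _))
  rw [weight_succ] at hle
  by_contra hne
  have := Nat.le_mul_of_pos_right (2 ^ t) (Nat.pos_of_ne_zero hne)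
  omega

lemma eq_emoveTarget {t : ℕ} {w : Fin (t + 2) → ℕ} (h0 : w 0 = 0) (hle : ∀ n, w n ≤ 1)
    (hw : weightedSum w = 2 ^ t - 1) : w = emoveTarget t := by
  have hlast := last_eq_zero_of_weightedSum_lt (hw ▸ Nat.sub_lt (by positivity) one_pos)
  have hle_target : ∀ n, w n ≤ emoveTarget t n := by
    intro n
    unfold emoveTarget
    split_ifs with hn
    · rcases hn with hn | hn
      · rw [show n = 0 from Fin.ext hn, h0]
      · rw [show n = Fin.last _ from Fin.ext hn, hlast]
    · exact hle n
  have heq := (sum_eq_sum_iff_of_le fun (n : Fin (t + 2)) _ =>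
    Nat.mul_le_mul_left (weight n) (hle_target n)).1 (hw.trans (weightedSum_emoveTarget t).symm)
  funext n
  exact Nat.eq_of_mul_eq_mul_left (weight_pos n) (heq n (mem_univ n))

lemma reflTransGen_emoveTarget {t : ℕ} (w : Fin (t + 2) → ℕ) (hw : weightedSum w = 2 ^ t - 1) :
    ReflTransGen (EMove t) w (emoveTarget t) := by
  obtain ⟨N, hN⟩ : ∃ N, ∑ n, w n + w 0 = N := ⟨_, rfl⟩
  induction N using Nat.strong_induction_on generalizing w with
  | _ N ih =>
  by_cases h0 : w 0 = 0
  · by_cases hbig : ∃ n, 2 ≤ w n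
    · obtain ⟨⟨j, hj⟩, hn⟩ := hbig
      have hlast := last_eq_zero_of_weightedSum_lt (hw ▸ Nat.sub_lt (by positivity) one_pos)
      have hj0 : j ≠ 0 := by rintro rfl; change 2 ≤ w 0 at hn; omega
      have hjt : j ≠ t + 1 := by rintro rfl; change 2 ≤ w (Fin.last _) at hn; omega
      have hcarry := reflTransGen_carry (j := j) (by omega) (by omega) w hn
      refine hcarry.trans (ih _ ?_ _ ((weightedSum_eq_of_reflTransGen hcarry).trans hw) rfl)
      have hsum := sum_update_update_add w (i := ⟨j, hj⟩) (j := ⟨j + 1, by omega⟩)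
        (Fin.ne_of_val_ne (by simp)) (w ⟨j, hj⟩ - 2) (w ⟨j + 1, by omega⟩ + 1)
      rw [update_of_ne (Fin.ne_of_val_ne (by simp)),
        update_of_ne (Fin.ne_of_val_ne (by simp; omega))]
      omega
    · push Not at hbig
      exact eq_emoveTarget h0 (fun n => by have := hbig n; omega) hw ▸ .refl
  · have hmove := emove_shift_zero w (Nat.pos_of_ne_zero h0)
    refine .head hmove (ih _ ?_ _ (hmove.weightedSum_eq.trans hw) rfl)
    have hsum := sum_update_update_add w zero_ne_one (w 0 - 1) (w 1 + 1)
    rw [update_of_ne zero_ne_one, update_self]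
    omega

theorem emove_reaches_target (t : ℕ) (w : Fin (t + 2) → ℕ)
    (hsum : ∑ n : Fin (t + 2), (if (n : ℕ) = 0 then 1 else 2 ^ ((n : ℕ) - 1)) * w n = 2 ^ t - 1) :
    Relation.ReflTransGen (EMove t) w
      (fun n => if (n : ℕ) = 0 ∨ (n : ℕ) = t + 1 then 0 else 1) :=
  reflTransGen_emoveTarget w hsum
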